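/- arXiv:2502.16336 — 3 statements merged into one kernel-verified Lean document; each statement's English description precedes it below -/
import Mathlib

section
/- Let α ∈ (0,1) and suppose τ⋆(x) := Q_{1−α}(P_{V|X=x}) > 0 for every x ∈ 𝒳 and is measurable. Define the rectified score Ṽ(x,y) := V(x,y)/τ⋆(x) and let Ṽ := Ṽ(X,Y). Then Q_{1−α}(P_{Ṽ}) = 1 and, for P_X-almost every x ∈ 𝒳, Q_{1−α}(P_{Ṽ|X=x}) = 1; in particular the marginal and conditional (1−α)-quantiles of the rectified score coincide. -/
/-! Given `X = x`, the rectified score is `V / τ⋆(x)` with `τ⋆(x) > 0` a constant, and quantiles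
commute with division by a positive constant, so its conditional `(1-α)`-quantile is
`τ⋆(x) / τ⋆(x) = 1`. The marginal law of the rectified score is the mixture over `P_X` of these
conditional laws, and a mixture of laws sharing the `β`-quantile `q` has `β`-quantile `q`: every
component gives `(-∞, q]` mass at least `β` and every `(-∞, t]` with `t < q` mass less than `β`,
and both inequalities survive integration. -/

open MeasureTheory ProbabilityTheory

/-- The `β`-quantile of a probability measure `P` on `ℝ`:
`Q_β(P) = inf {t : P((-∞, t]) ≥ β}`. -/
noncomputable def quantile (P : Measure ℝ) (β : ℝ) : ℝ :=
  sInf {t : ℝ | ENNReal.ofReal β ≤ P (Set.Iic t)}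

open Set Filter Topology
open scoped Pointwise

lemma tendsto_measure_Iic_atBot (P : Measure ℝ) [IsProbabilityMeasure P] :
    Tendsto (fun t => P (Iic t)) atBot (𝓝 0) := by
  simpa [ofReal_cdf] using ENNReal.tendsto_ofReal (tendsto_cdf_atBot (μ := P))

lemma continuousWithinAt_measure_Iic (P : Measure ℝ) [IsProbabilityMeasure P] (x : ℝ) :
    ContinuousWithinAt (fun t => P (Iic t)) (Ici x) x := by
  simp_rw [← ofReal_cdf]
  exact ENNReal.continuous_ofReal.continuousAt.comp_continuousWithinAt
    ((cdf P).right_continuous x)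

section Quantile

variable {P : Measure ℝ} {β : ℝ}

lemma quantile_eq_of_le_of_lt {q : ℝ} (hq : ENNReal.ofReal β ≤ P (Iic q))
    (hlt : ∀ t < q, P (Iic t) < ENNReal.ofReal β) : quantile P β = q :=
  IsLeast.csInf_eq ⟨hq, fun t ht => le_of_not_gt fun htq => (hlt t htq).not_ge ht⟩

lemma quantile_map_div_const {c : ℝ} (hc : 0 < c) (P : Measure ℝ) (β : ℝ) :
    quantile (P.map (· / c)) β = quantile P β / c := by
  have hset : {t | ENNReal.ofReal β ≤ P.map (· / c) (Iic t)}
      = c⁻¹ • {t | ENNReal.ofReal β ≤ P (Iic t)} := by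
    ext t
    rw [Set.mem_smul_set_iff_inv_smul_mem₀ (inv_ne_zero hc.ne'), inv_inv, smul_eq_mul,
      mem_ofPred_eq, mem_ofPred_eq, Measure.map_apply (measurable_div_const c) measurableSet_Iic]
    congr! 2
    ext v
    simp [div_le_iff₀ hc, mul_comm]
  rw [quantile, hset, Real.sInf_smul_of_nonneg (inv_nonneg.2 hc.le), quantile, smul_eq_mul,
    inv_mul_eq_div]

variable [IsProbabilityMeasure P]

lemma bddBelow_quantile_set (hβ : 0 < β) : BddBelow {t | ENNReal.ofReal β ≤ P (Iic t)} := by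
  obtain ⟨a, ha⟩ := eventually_atBot.1 <|
    (tendsto_measure_Iic_atBot P).eventually_lt_const (ENNReal.ofReal_pos.2 hβ)
  exact ⟨a, fun t ht => le_of_not_ge fun hta => (ha t hta).not_ge ht⟩

lemma measure_Iic_lt_of_lt_quantile (hβ : 0 < β) {t : ℝ} (ht : t < quantile P β) :
    P (Iic t) < ENNReal.ofReal β :=
  not_le.1 <| notMem_of_lt_csInf (s := {t | ENNReal.ofReal β ≤ P (Iic t)}) ht
    (bddBelow_quantile_set hβ)

lemma ofReal_le_measure_Iic_quantile (hβ : β < 1) :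
    ENNReal.ofReal β ≤ P (Iic (quantile P β)) := by
  have hne : {t | ENNReal.ofReal β ≤ P (Iic t)}.Nonempty := by
    refine ((tendsto_measure_Iic_atTop P).eventually_const_le ?_).exists
    simpa using ENNReal.ofReal_lt_one.2 hβ
  refine ge_of_tendsto ((continuousWithinAt_measure_Iic P _).mono Ioi_subset_Ici_self)
    (eventually_nhdsWithin_of_forall fun t ht => ?_)
  obtain ⟨s, hs, hst⟩ := exists_lt_of_csInf_lt hne ht
  exact hs.trans (measure_mono (Iic_subset_Iic.2 hst.le))

lemma quantile_eq_iff (hβ0 : 0 < β) (hβ1 : β < 1) {q : ℝ} :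
    quantile P β = q ↔
      ENNReal.ofReal β ≤ P (Iic q) ∧ ∀ t < q, P (Iic t) < ENNReal.ofReal β := by
  refine ⟨?_, fun h => quantile_eq_of_le_of_lt h.1 h.2⟩
  rintro rfl
  exact ⟨ofReal_le_measure_Iic_quantile hβ1, fun t => measure_Iic_lt_of_lt_quantile hβ0⟩

end Quantile

lemma quantile_comp_eq_of_ae_quantile_eq {𝓧 : Type*} [MeasurableSpace 𝓧] {m : Measure 𝓧}
    [IsProbabilityMeasure m] {η : Kernel 𝓧 ℝ} [IsMarkovKernel η] {β q : ℝ} (hβ0 : 0 < β)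
    (hβ1 : β < 1) (h : ∀ᵐ x ∂m, quantile (η x) β = q) : quantile (η ∘ₘ m) β = q := by
  simp_rw [quantile_eq_iff hβ0 hβ1] at h ⊢
  have hmix : ∀ t, (η ∘ₘ m) (Iic t) = ∫⁻ x, η x (Iic t) ∂m := fun t =>
    Measure.bind_apply measurableSet_Iic η.aemeasurable
  have hconst : ∫⁻ _, ENNReal.ofReal β ∂m = ENNReal.ofReal β := by simp
  refine ⟨?_, fun t ht => ?_⟩
  · rw [hmix, ← hconst]
    exact lintegral_mono_ae (h.mono fun x hx => hx.1)
  · rw [hmix, ← hconst]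
    refine lintegral_strict_mono (IsProbabilityMeasure.ne_zero m) aemeasurable_const ?_
      (h.mono fun x hx => hx.2 t ht)
    exact ((lintegral_mono fun x => prob_le_one).trans_lt (by simp)).ne

lemma ae_condDistrib_eq_map {α β Ω Ω' : Type*} {mα : MeasurableSpace α} [MeasurableSpace β]
    [MeasurableSpace Ω] [StandardBorelSpace Ω] [Nonempty Ω]
    [MeasurableSpace Ω'] [StandardBorelSpace Ω'] [Nonempty Ω']
    {μ : Measure α} [IsFiniteMeasure μ] {X : α → β} {Y : α → Ω} (hX : AEMeasurable X μ)
    (hY : AEMeasurable Y μ) {f : β → Ω → Ω'} (hf : Measurable (Function.uncurry f)) :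
    ∀ᵐ x ∂μ.map X,
      condDistrib (fun ω => f (X ω) (Y ω)) X μ x = (condDistrib Y X μ x).map (f x) := by
  set η : Kernel β Ω' := (Kernel.id ×ₖ condDistrib Y X μ).map (Function.uncurry f)
  have hη : ∀ x, η x = (condDistrib Y X μ x).map (f x) := fun x => by
    rw [Kernel.map_apply _ hf, Kernel.prod_apply, Kernel.id_apply, Measure.dirac_prod,
      Measure.map_map hf measurable_prodMk_left]
    rfl
  have hjoint : μ.map (fun ω => (X ω, f (X ω) (Y ω))) = μ.map X ⊗ₘ η := by
    have hG : Measurable fun q : β × Ω => (q.1, Function.uncurry f q) :=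
      measurable_fst.prodMk hf
    have hkernel : (Kernel.id ×ₖ condDistrib Y X μ).map (fun q => (q.1, Function.uncurry f q))
        = Kernel.id ×ₖ η := by
      ext1 x
      rw [Kernel.map_apply _ hG, Kernel.prod_apply, Kernel.prod_apply, Kernel.id_apply, hη,
        Measure.dirac_prod, Measure.dirac_prod, Measure.map_map hG measurable_prodMk_left,
        Measure.map_map measurable_prodMk_left hf.of_uncurry_left]
      rfl
    rw [Measure.compProd_eq_comp_prod, ← hkernel, ← Measure.map_comp _ _ hG,
      ← Measure.compProd_eq_comp_prod, compProd_map_condDistrib hY,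
      AEMeasurable.map_map_of_aemeasurable hG.aemeasurable (hX.prodMk hY)]
    rfl
  filter_upwards [condDistrib_ae_eq_of_measure_eq_compProd X
    (hf.comp_aemeasurable (hX.prodMk hY)) hjoint] with x hx
  exact hx.trans (hη x)

/-- For the multiplicatively rectified score
`Ṽ(x,y) = V(x,y) / τ⋆(x)` with `τ⋆(x) = Q_{1-α}(P_{V|X=x}) > 0`, the marginal
`(1-α)`-quantile of `Ṽ(X,Y)` equals `1`, and for `P_X`-a.e. `x` the conditional
`(1-α)`-quantile of `Ṽ(X,Y)` given `X = x` also equals `1`. -/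
theorem rectified_score_linear_quantile
    {Ω : Type*} [MeasurableSpace Ω]
    (μ : Measure Ω) [IsProbabilityMeasure μ]
    {p d : ℕ}
    (X : Ω → (Fin p → ℝ)) (Y : Ω → (Fin d → ℝ))
    (hX : Measurable X) (hY : Measurable Y)
    (V : (Fin p → ℝ) → (Fin d → ℝ) → ℝ)
    (hV : Measurable (Function.uncurry V))
    (α : ℝ) (hα : α ∈ Set.Ioo (0 : ℝ) 1)
    -- `τ⋆(x) = Q_{1-α}(P_{V | X = x})`, measurable and positive
    (τstar : (Fin p → ℝ) → ℝ)
    (hτstar_def : ∀ x, τstar x =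
      quantile (condDistrib (fun ω => V (X ω) (Y ω)) X μ x) (1 - α))
    (hτstar_meas : Measurable τstar)
    (hτstar_pos : ∀ x, 0 < τstar x) :
    quantile (μ.map (fun ω => V (X ω) (Y ω) / τstar (X ω))) (1 - α) = 1 ∧
    ∀ᵐ x ∂(μ.map X),
      quantile (condDistrib (fun ω => V (X ω) (Y ω) / τstar (X ω)) X μ x) (1 - α) = 1 := by
  obtain ⟨hα0, hα1⟩ := hα
  have hW : Measurable fun ω => V (X ω) (Y ω) := hV.comp (hX.prodMk hY)
  have hcond : ∀ᵐ x ∂μ.map X,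
      quantile (condDistrib (fun ω => V (X ω) (Y ω) / τstar (X ω)) X μ x) (1 - α) = 1 := by
    filter_upwards [ae_condDistrib_eq_map (f := fun x v => v / τstar x) hX.aemeasurable
      hW.aemeasurable (measurable_snd.div (hτstar_meas.comp measurable_fst))] with x hx
    rw [hx, quantile_map_div_const (hτstar_pos x), ← hτstar_def, div_self (hτstar_pos x).ne']
  refine ⟨?_, hcond⟩
  have hrect : Measurable fun ω => V (X ω) (Y ω) / τstar (X ω) := hW.div (hτstar_meas.comp hX)
  have := Measure.isProbabilityMeasure_map (μ := μ) hX.aemeasurable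
  rw [← condDistrib_comp_map hX.aemeasurable hrect.aemeasurable]
  exact quantile_comp_eq_of_ae_quantile_eq (by linarith) (by linarith) hcond
end

section
/- (Maximal inequality for weighted Rademacher sums.) Let ε_1,…,ε_m be i.i.d. Rademacher random variables taking values in {−1,1} with equal probability, let p_1,…,p_m ∈ ℝ, and let θ > 0. Then E[exp(θ · max_{0 ≤ i ≤ m} Σ_{j=1}^{i} p_j ε_j)] ≤ 2 · Π_{k=1}^{m} cosh(θ p_k), where by convention the empty sum (i = 0) equals 0. -/
/-!
Absorb `θ` into the weights `w = θ p`, and let `M` be the running maximum and `S` the total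
sum of the walk `w_j ε_j`. The bound is the case `c = 0` of the stronger claim
`E e^{max(c, M)} ≤ E[e^{max(c, S)} + e^{max(c, -S)}] - e^c` for every level `c`, proved by
induction on the number of steps, conditioning on the first one: `M = max(0, a + M')` with
`a = ±w_1`, so `e^{max(c, M)} = e^a e^{max(c⁺ - a, M')}`; the induction hypothesis at the
shifted level `c⁺ - a` and the symmetry `a ↔ -a` give the claim at level `c⁺`, and lowering
the level from `c⁺` to `c` can only increase the right-hand side. At `c = 0` the right-hand
side is at most `E[e^S + e^{-S}] = 2 ∏ cosh w_k`. Independent Rademacher variables are uniform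
on the cube `{±1}^m`, so the expectation is an average over sign patterns.
-/

open Finset Real MeasureTheory ProbabilityTheory
open scoped BigOperators ENNReal

noncomputable section

lemma Fin.expect_univ_pi_succ {M : Type*} [AddCommMonoid M] [Module ℚ≥0 M] {m : ℕ}
    {α : Fin (m + 1) → Type*} [∀ i, Fintype (α i)] (f : (∀ i, α i) → M) :
    𝔼 x, f x = 𝔼 a, 𝔼 y, f (Fin.cons a y : ∀ i, α i) := by
  rw [← expect_product', univ_product_univ]
  exact (Fintype.expect_equiv (Fin.consEquiv α) _ _ fun _ => rfl).symm

lemma Fintype.expect_bool {K : Type*} [Semifield K] [CharZero K] (f : Bool → K) :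
    𝔼 b, f b = (f true + f false) / 2 := by
  rw [Fintype.expect_eq_sum_div_card, Fintype.sum_bool, Fintype.card_bool, Nat.cast_ofNat]

lemma Fintype.prod_expect {K : Type*} [Semifield K] [CharZero K] {ι : Type*} [Fintype ι]
    [DecidableEq ι] {α : ι → Type*} [∀ i, Fintype (α i)] (f : ∀ i, α i → K) :
    ∏ i, 𝔼 a, f i a = 𝔼 x : ∀ i, α i, ∏ i, f i (x i) := by
  simp only [Fintype.expect_eq_sum_div_card, ← Fintype.prod_sum, Fintype.card_pi, Nat.cast_prod,
    prod_div_distrib]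

section RunningMax
variable {α : Type*} {m : ℕ}

def prefixSum [AddCommMonoid α] (x : Fin m → α) (i : ℕ) : α :=
  ∑ j ∈ univ.filter (fun j : Fin m => (j : ℕ) < i), x j

@[simp] lemma prefixSum_zero [AddCommMonoid α] (x : Fin m → α) : prefixSum x 0 = 0 := by
  simp [prefixSum]

lemma prefixSum_cons_succ [AddCommMonoid α] (a : α) (x : Fin m → α) (i : ℕ) :
    prefixSum (Fin.cons a x : Fin (m + 1) → α) (i + 1) = a + prefixSum x i := by
  simp [prefixSum, sum_filter, Fin.sum_univ_succ]

def runningMax [AddCommMonoid α] [LinearOrder α] (x : Fin m → α) : α :=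
  (range (m + 1)).sup' (nonempty_range_iff.mpr (Nat.succ_ne_zero m)) (prefixSum x)

lemma runningMax_nonneg [AddCommMonoid α] [LinearOrder α] (x : Fin m → α) : 0 ≤ runningMax x :=
  (prefixSum_zero x).symm.le.trans (le_sup' (prefixSum x) (by simp))

lemma runningMax_fin_zero [AddCommMonoid α] [LinearOrder α] (x : Fin 0 → α) :
    runningMax x = 0 := by
  simp [runningMax]

lemma runningMax_cons [AddCommGroup α] [LinearOrder α] [IsOrderedAddMonoid α] (a : α)
    (x : Fin m → α) :
    runningMax (Fin.cons a x : Fin (m + 1) → α) = max 0 (a + runningMax x) := by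
  refine eq_of_forall_ge_iff fun b => ?_
  simp only [runningMax, add_sup', sup'_le_iff, max_le_iff, mem_range, Nat.forall_lt_succ_left,
    prefixSum_zero, prefixSum_cons_succ]

end RunningMax

lemma runningMax_const_mul {m : ℕ} {θ : ℝ} (hθ : 0 ≤ θ) (x : Fin m → ℝ) :
    runningMax (fun j => θ * x j) = θ * runningMax x := by
  rw [runningMax, runningMax, mul₀_sup' hθ]
  simp only [prefixSum, mul_sum]
  rfl

def boolSign (b : Bool) : ℝ := if b then 1 else -1

@[simp] lemma boolSign_true : boolSign true = 1 := rfl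
@[simp] lemma boolSign_false : boolSign false = -1 := rfl

lemma boolSign_injective : Function.Injective boolSign := by
  intro a b; cases a <;> cases b <;> norm_num [boolSign]

lemma expect_exp_mul_boolSign (a : ℝ) : 𝔼 b, exp (a * boolSign b) = cosh a := by
  rw [Fintype.expect_bool, cosh_eq]; simp [mul_neg]

lemma expect_exp_sum_mul_boolSign {ι : Type*} [Fintype ι] [DecidableEq ι] (w : ι → ℝ) :
    𝔼 s : ι → Bool, exp (∑ j, w j * boolSign (s j)) = ∏ j, cosh (w j) := by
  simp only [exp_sum, ← Fintype.prod_expect fun j b => exp (w j * boolSign b),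
    expect_exp_mul_boolSign]

lemma expect_cosh_sum_mul_boolSign {ι : Type*} [Fintype ι] [DecidableEq ι] (w : ι → ℝ) :
    𝔼 s : ι → Bool, cosh (∑ j, w j * boolSign (s j)) = ∏ j, cosh (w j) := by
  have h := expect_exp_sum_mul_boolSign (-w)
  simp only [Pi.neg_apply, neg_mul, sum_neg_distrib, cosh_neg] at h
  simp only [cosh_eq, ← expect_div, expect_add_distrib, expect_exp_sum_mul_boolSign, h]
  ring

def signedWeights {m : ℕ} (w : Fin m → ℝ) (s : Fin m → Bool) (j : Fin m) : ℝ :=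
  w j * boolSign (s j)

lemma signedWeights_cons {m : ℕ} (w : Fin (m + 1) → ℝ) (b : Bool) (t : Fin m → Bool) :
    signedWeights w (Fin.cons b t) =
      Fin.cons (w 0 * boolSign b) (signedWeights (Fin.tail w) t) := by
  ext j; cases j using Fin.cases <;> rfl

lemma signedWeights_const_mul {m : ℕ} (θ : ℝ) (w : Fin m → ℝ) (s : Fin m → Bool) :
    signedWeights (fun k => θ * w k) s = fun j => θ * signedWeights w s j :=
  funext fun _ => mul_assoc _ _ _

def reflectionBound (c y : ℝ) : ℝ := exp (max c y) + exp (max c (-y)) - exp c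

lemma exp_max_add (a c y : ℝ) : exp (max c (a + y)) = exp a * exp (max (c - a) y) := by
  rw [← exp_add, ← max_add_add_left, add_sub_cancel]

lemma exp_mul_reflectionBound (a c y : ℝ) :
    exp a * reflectionBound (c - a) y = exp (max c (a + y)) + exp (max c (a - y)) - exp c := by
  simp only [reflectionBound, exp_max_add, sub_eq_add_neg a y, mul_sub, mul_add, ← exp_add,
    add_sub_cancel]

lemma reflectionBound_zero (y : ℝ) : reflectionBound 0 y = exp |y| := by
  rcases le_total 0 y with hy | hy
  · simp [reflectionBound, hy, abs_of_nonneg]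
  · simp [reflectionBound, hy, abs_of_nonpos]

lemma exp_abs_le_reflectionBound {c : ℝ} (y : ℝ) (hc : c ≤ |y|) :
    exp |y| ≤ reflectionBound c y := by
  have h := exp_le_exp.2 (le_max_left c (-|y|))
  rcases le_total 0 y with hy | hy
  · rw [abs_of_nonneg hy] at *
    simp only [reflectionBound, max_eq_right hc]
    linarith
  · rw [abs_of_nonpos hy, neg_neg] at *
    simp only [reflectionBound, max_eq_right hc]
    linarith

lemma reflectionBound_max_zero_le (c y : ℝ) :
    reflectionBound (max c 0) y ≤ reflectionBound c y := by
  rcases le_total 0 c with hc | hc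
  · rw [max_eq_left hc]
  · rw [max_eq_right hc, reflectionBound_zero]
    exact exp_abs_le_reflectionBound y (hc.trans (abs_nonneg y))

lemma reflectionBound_zero_le (y : ℝ) : reflectionBound 0 y ≤ 2 * cosh y := by
  rw [reflectionBound_zero, cosh_eq]
  rcases le_total 0 y with hy | hy
  · rw [abs_of_nonneg hy]; linarith [exp_pos (-y)]
  · rw [abs_of_nonpos hy]; linarith [exp_pos y]

lemma expect_exp_max_runningMax_le {m : ℕ} (w : Fin m → ℝ) (c : ℝ) :
    𝔼 s, exp (max c (runningMax (signedWeights w s))) ≤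
      𝔼 s, reflectionBound c (∑ j, signedWeights w s j) := by
  induction m generalizing c with
  | zero =>
    simp only [runningMax_fin_zero, univ_eq_empty, sum_empty, reflectionBound, neg_zero]
    rw [Fintype.expect_const, Fintype.expect_const]
    linarith [exp_le_exp.2 (le_max_left c 0)]
  | succ m ih =>
    set c' := max c 0
    set a : Bool → ℝ := fun b => w 0 * boolSign b
    calc 𝔼 s, exp (max c (runningMax (signedWeights w s)))
        = 𝔼 b, exp (a b) *
            𝔼 t, exp (max (c' - a b) (runningMax (signedWeights (Fin.tail w) t))) := by
          simp only [Fin.expect_univ_pi_succ, signedWeights_cons, runningMax_cons, mul_expect,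
            ← max_assoc, ← exp_max_add]
          rfl
      _ ≤ 𝔼 b, exp (a b) *
            𝔼 t, reflectionBound (c' - a b) (∑ j, signedWeights (Fin.tail w) t j) :=
          expect_le_expect fun b _ => mul_le_mul_of_nonneg_left (ih _ _) (exp_pos _).le
      _ = 𝔼 s, reflectionBound c' (∑ j, signedWeights w s j) := by
          simp only [Fin.expect_univ_pi_succ (α := fun _ => Bool), signedWeights_cons,
            Fin.sum_cons, mul_expect, exp_mul_reflectionBound]
          rw [Fintype.expect_bool, Fintype.expect_bool, ← expect_add_distrib,
            ← expect_add_distrib]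
          congr 2; funext t
          simp only [reflectionBound, a, boolSign_true, boolSign_false]
          ring_nf
      _ ≤ 𝔼 s, reflectionBound c (∑ j, signedWeights w s j) :=
          expect_le_expect fun s _ => reflectionBound_max_zero_le c _

lemma expect_exp_runningMax_le {m : ℕ} (w : Fin m → ℝ) :
    𝔼 s, exp (runningMax (signedWeights w s)) ≤ 2 * ∏ j, cosh (w j) :=
  calc 𝔼 s, exp (runningMax (signedWeights w s))
      = 𝔼 s, exp (max 0 (runningMax (signedWeights w s))) := by
        simp only [max_eq_right (runningMax_nonneg _)]
    _ ≤ 𝔼 s, reflectionBound 0 (∑ j, signedWeights w s j) := expect_exp_max_runningMax_le w 0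
    _ ≤ 𝔼 s, 2 * cosh (∑ j, signedWeights w s j) :=
        expect_le_expect fun s _ => reflectionBound_zero_le _
    _ = 2 * ∏ j, cosh (w j) := by
        rw [← mul_expect]
        exact congrArg _ (expect_cosh_sum_mul_boolSign w)

def rademacherMeasure : Measure ℝ := (2⁻¹ : ℝ≥0∞) • (Measure.dirac 1 + Measure.dirac (-1))

section Rademacher
variable {Ω : Type*} [MeasurableSpace Ω] {μ : Measure Ω}

lemma measure_preimage_boolSign {X : Ω → ℝ} (hX : Measurable X)
    (hlaw : μ.map X = rademacherMeasure) (b : Bool) : μ (X ⁻¹' {boolSign b}) = 2⁻¹ := by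
  rw [← Measure.map_apply hX (measurableSet_singleton _), hlaw]
  cases b <;> norm_num [rademacherMeasure]

lemma ae_mem_range_boolSign {X : Ω → ℝ} (hX : Measurable X)
    (hlaw : μ.map X = rademacherMeasure) : ∀ᵐ ω ∂μ, X ω ∈ Set.range boolSign := by
  refine ae_of_ae_map hX.aemeasurable ?_
  rw [hlaw, ae_iff]
  simp [rademacherMeasure]

lemma integral_comp_eq_expect_boolSign [IsProbabilityMeasure μ] {m : ℕ} {ε : Fin m → Ω → ℝ}
    (hε_meas : ∀ k, Measurable (ε k)) (hε_indep : iIndepFun ε μ)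
    (hε_law : ∀ k, μ.map (ε k) = rademacherMeasure) (G : (Fin m → ℝ) → ℝ) :
    ∫ ω, G (fun k => ε k ω) ∂μ = 𝔼 s : Fin m → Bool, G (fun k => boolSign (s k)) := by
  classical
  set E : (Fin m → Bool) → Set Ω := fun s => ⋂ k, ε k ⁻¹' {boolSign (s k)}
  have hE_meas (s) : MeasurableSet (E s) :=
    .iInter fun k => hε_meas k (measurableSet_singleton _)
  have hE (s) : μ (E s) = 2⁻¹ ^ m := by
    rw [hε_indep.meas_iInter fun k => ⟨_, measurableSet_singleton _, rfl⟩]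
    simp [measure_preimage_boolSign (hε_meas _) (hε_law _)]
  have hG : (fun ω => G (fun k => ε k ω)) =ᵐ[μ]
      fun ω => ∑ s, (E s).indicator (fun _ => G (fun k => boolSign (s k))) ω := by
    filter_upwards [ae_all_iff.2 fun k => ae_mem_range_boolSign (hε_meas k) (hε_law k)]
      with ω hω
    choose s₀ hs₀ using hω
    have hmem (s) : ω ∈ E s ↔ s₀ = s := by
      simp [E, ← hs₀, boolSign_injective.eq_iff, funext_iff]
    simp only [Set.indicator_apply, hmem, sum_ite_eq, mem_univ, if_true, hs₀]
  rw [integral_congr_ae hG,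
    integral_finsetSum _ fun s _ => (integrable_const _).indicator (hE_meas s)]
  simp [integral_indicator_const _ (hE_meas _), measureReal_def, hE,
    Fintype.expect_eq_sum_div_card, div_eq_inv_mul, mul_sum]

end Rademacher

end

/-- Maximal inequality for weighted Rademacher sums: if
`ε_1, …, ε_m` are i.i.d. Rademacher random variables, `p_1, …, p_m ∈ ℝ` and
`θ > 0`, then
`E[exp(θ · max_{0 ≤ i ≤ m} Σ_{j=1}^i p_j ε_j)] ≤ 2 ∏_{k=1}^m cosh(θ p_k)`. -/
theorem weighted_rademacher_maximal_inequality
    {Ω : Type*} [MeasurableSpace Ω]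
    (μ : Measure Ω) [IsProbabilityMeasure μ]
    (m : ℕ) (ε : Fin m → Ω → ℝ)
    (hε_meas : ∀ k, Measurable (ε k))
    (hε_indep : iIndepFun ε μ)
    (hε_law : ∀ k, μ.map (ε k) =
      (2⁻¹ : ℝ≥0∞) • (Measure.dirac (1 : ℝ) + Measure.dirac (-1 : ℝ)))
    (p : Fin m → ℝ) (θ : ℝ) (hθ : 0 < θ) :
    ∫ ω, Real.exp (θ *
        (Finset.range (m + 1)).sup' (Finset.nonempty_range_iff.mpr (Nat.succ_ne_zero m))
          (fun i => ∑ j ∈ Finset.univ.filter (fun j : Fin m => (j : ℕ) < i),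
            p j * ε j ω)) ∂μ ≤
      2 * ∏ k : Fin m, Real.cosh (θ * p k) :=
  calc _ = 𝔼 s, exp (θ * runningMax (signedWeights p s)) :=
        integral_comp_eq_expect_boolSign hε_meas hε_indep hε_law
          fun x => exp (θ * runningMax fun j => p j * x j)
    _ = 𝔼 s, exp (runningMax (signedWeights (fun k => θ * p k) s)) := by
        simp only [signedWeights_const_mul, runningMax_const_mul hθ.le]
    _ ≤ 2 * ∏ k : Fin m, cosh (θ * p k) := expect_exp_runningMax_le _
end

section
/- (Bias control for kernel-weighted conditional c.d.f.s.) Let X_1,…,X_m be i.i.d. copies of X, a random vector in ℝ^d with density f_X. Fix x ∈ ℝ^d and h > 0, set w̃_k(x) := K_h(‖x − X_k‖), and let F(v | x̃) := P(V_φ(X,Y) ≤ v | X = x̃). Assume there is M ≥ 0 such that for every v ∈ ℝ the map x̃ ↦ F(v | x̃) is M-Lipschitz, and that t ↦ K_h(t) is non-increasing on ℝ_+. Define F_X(t,x) := ∫_{S^{d−1}} f_X(x − tω) dσ(ω) (σ the surface measure on the unit sphere) and D_h(x) := h^{d−1} · ‖F_X(·,x)‖_∞ · ∫_0^∞ t^{d−1}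 K_1(t) dt, assumed finite. Then for every γ ∈ (0,1), with probability at least 1 − γ, sup_{v∈ℝ} | Σ_{k=1}^{m} w̃_k(x) · ( F(v | X_k) − F(v | x) ) | ≤ m·D_h(x) + M·sup_{t≥0}{ t K_1(t) } · √( m·log(1/γ) / 2 ). -/
open MeasureTheory ProbabilityTheory Set Metric
open scoped NNReal ENNReal

/-!
Uniformly in `v`, the `k`-th summand is at most `ψ(X_k)`, where
`ψ(z) = K_h(‖x - z‖) · min(1, M‖x - z‖)`: the c.d.f.s take values in `[0, 1]` and are
`M`-Lipschitz. Since `K_h(r) · r = (r/h) K_1(r/h)`, `ψ` takes values in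
`[0, M · sup_{t ≥ 0} t K_1(t)]`, so Hoeffding's inequality for the i.i.d. variables `ψ(X_k)` gives
the fluctuation term. For the mean, `E ψ(X) ≤ ∫ K_h(‖x - z‖) f_X(z) dz`, which in polar
coordinates around `x` is `∫_0^∞ r^{d-1} K_h(r) F_X(r, x) dr ≤ D_h(x)` after substituting `r = h t`.
-/

theorem AntitoneOn.measurable_comp_norm {E : Type*} [NormedAddCommGroup E] [MeasurableSpace E]
    [OpensMeasurableSpace E] {g : ℝ → ℝ} (hg : AntitoneOn g (Ici 0)) :
    Measurable fun v : E => g ‖v‖ := by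
  have hmono : Antitone fun t => g (max t 0) := fun s t hst =>
    hg (mem_Ici.2 (le_max_right _ _)) (mem_Ici.2 (le_max_right _ _)) (max_le_max_right 0 hst)
  simpa only [Function.comp_def, max_eq_left (norm_nonneg _)] using
    hmono.measurable.comp (measurable_norm (α := E))

theorem setIntegral_Ioi_pow_mul_nonneg (n : ℕ) {K : ℝ → ℝ} (hK : ∀ t, 0 < t → 0 ≤ K t) :
    0 ≤ ∫ t in Ioi (0 : ℝ), t ^ n * K t :=
  setIntegral_nonneg measurableSet_Ioi fun t ht => mul_nonneg (pow_nonneg (le_of_lt ht) _) (hK t ht)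

theorem lintegral_Ioi_pow_mul_rescaled_kernel (n : ℕ) {K : ℝ → ℝ}
    (hK : ∀ t, 0 < t → 0 ≤ K t)
    (hmom : IntegrableOn (fun t => t ^ n * K t) (Ioi 0)) {h : ℝ} (hh : 0 < h) :
    ∫⁻ r in Ioi (0 : ℝ), ENNReal.ofReal (r ^ n) * ENNReal.ofReal (h⁻¹ * K (r / h)) =
      ENNReal.ofReal (h ^ n * ∫ t in Ioi (0 : ℝ), t ^ n * K t) := by
  set G : ℝ → ℝ := fun t => t ^ n * K t
  have hG : ∀ r, 0 < r → 0 ≤ G (h⁻¹ * r) := fun r hr =>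
    have := mul_pos (inv_pos.2 hh) hr; mul_nonneg (pow_nonneg this.le _) (hK _ this)
  have hGint : IntegrableOn (fun r => G (h⁻¹ * r)) (Ioi 0) :=
    (integrableOn_Ioi_comp_mul_left_iff G 0 (inv_pos.2 hh)).2 (by simpa using hmom)
  have hscale : ∀ r ∈ Ioi (0 : ℝ),
      ENNReal.ofReal (r ^ n) * ENNReal.ofReal (h⁻¹ * K (r / h)) =
        ENNReal.ofReal (h ^ n * h⁻¹ * G (h⁻¹ * r)) := by
    intro r hr
    rw [← ENNReal.ofReal_mul (pow_nonneg (le_of_lt hr) n), inv_mul_eq_div]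
    congr 1
    simp only [G, inv_mul_eq_div, div_pow]
    field_simp
  calc ∫⁻ r in Ioi (0 : ℝ), ENNReal.ofReal (r ^ n) * ENNReal.ofReal (h⁻¹ * K (r / h))
      = ENNReal.ofReal (∫ r in Ioi (0 : ℝ), h ^ n * h⁻¹ * G (h⁻¹ * r)) := by
        rw [setLIntegral_congr_fun measurableSet_Ioi hscale]
        refine (ofReal_integral_eq_lintegral_ofReal (hGint.const_mul _) ?_).symm
        filter_upwards [ae_restrict_mem measurableSet_Ioi] with r hr
        exact mul_nonneg (by positivity) (hG r hr)
    _ = _ := by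
        rw [integral_const_mul, integral_comp_mul_left_Ioi G 0 (inv_pos.2 hh), mul_zero, inv_inv,
          smul_eq_mul]
        field_simp

theorem LipschitzWith.abs_sub_le_min_one {α : Type*} [PseudoMetricSpace α] {f : α → ℝ}
    {M : ℝ≥0} (hf : LipschitzWith M f) (hf01 : ∀ z, f z ∈ Icc (0 : ℝ) 1) (y z : α) :
    |f y - f z| ≤ min 1 (M * dist y z) := by
  refine le_min (abs_sub_le_iff.2 ⟨?_, ?_⟩) ?_
  · linarith [(hf01 y).2, (hf01 z).1]
  · linarith [(hf01 y).1, (hf01 z).2]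
  · simpa [Real.dist_eq] using hf.dist_le_mul y z

theorem rescaled_kernel_mul_min_mem_Icc {K : ℝ → ℝ} (hK : ∀ t, 0 ≤ K t)
    (hK_bdd : BddAbove (range fun t : Ici (0 : ℝ) => (t : ℝ) * K t)) {h : ℝ} (hh : 0 < h)
    (M : ℝ≥0) {r : ℝ} (hr : 0 ≤ r) :
    h⁻¹ * K (r / h) * min 1 (M * r) ∈ Icc 0 (M * ⨆ t : Ici (0 : ℝ), (t : ℝ) * K t) := by
  have hKh : 0 ≤ h⁻¹ * K (r / h) := mul_nonneg (inv_nonneg.2 hh.le) (hK _)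
  refine ⟨mul_nonneg hKh (le_min zero_le_one (by positivity)), ?_⟩
  calc h⁻¹ * K (r / h) * min 1 (M * r) ≤ h⁻¹ * K (r / h) * (M * r) := by
        gcongr; exact min_le_right _ _
    _ = M * (r / h * K (r / h)) := by ring
    _ ≤ _ := by gcongr; exact le_ciSup hK_bdd ⟨r / h, div_nonneg hr hh.le⟩

theorem ciSup_abs_sum_mul_le {α ι : Type*} [Nonempty α] (s : Finset ι) {w : ι → ℝ}
    (hw : ∀ i, 0 ≤ w i) {G : ι → α → ℝ} {c : ι → ℝ} (hG : ∀ i v, |G i v| ≤ c i) :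
    (⨆ v, |∑ i ∈ s, w i * G i v|) ≤ ∑ i ∈ s, w i * c i :=
  ciSup_le fun v => (Finset.abs_sum_le_sum_abs _ _).trans <|
    Finset.sum_le_sum fun i _ => by
      rw [abs_mul, abs_of_nonneg (hw i)]
      exact mul_le_mul_of_nonneg_left (hG i v) (hw i)

section PolarCoordinates

variable {E : Type*} [NormedAddCommGroup E] [NormedSpace ℝ E] [FiniteDimensional ℝ E]
  [MeasurableSpace E] [BorelSpace E] [Nontrivial E] (μ : Measure E) [μ.IsAddHaarMeasure]

theorem lintegral_eq_lintegral_Ioi_lintegral_sphere {g : E → ℝ≥0∞} (hg : Measurable g) :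
    ∫⁻ y, g y ∂μ =
      ∫⁻ r in Ioi (0 : ℝ), ENNReal.ofReal (r ^ (Module.finrank ℝ E - 1)) *
        ∫⁻ ω : sphere (0 : E) 1, g (r • (ω : E)) ∂μ.toSphere := by
  have hG : Measurable fun q : sphere (0 : E) 1 × Ioi (0 : ℝ) => g ((q.2 : ℝ) • (q.1 : E)) :=
    by fun_prop
  calc ∫⁻ y, g y ∂μ = ∫⁻ y : ({0}ᶜ : Set E), g y ∂(μ.comap Subtype.val) := by
        rw [lintegral_subtype_comap (measurableSet_singleton _).compl, restrict_compl_singleton]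
    _ = ∫⁻ q, g ((q.2 : ℝ) • (q.1 : E))
          ∂(μ.toSphere.prod (Measure.volumeIoiPow (Module.finrank ℝ E - 1))) := by
        rw [← (μ.measurePreserving_homeomorphUnitSphereProd).lintegral_comp_emb
          (Homeomorph.measurableEmbedding _)]
        refine lintegral_congr fun y => ?_
        simp [smul_inv_smul₀ (norm_ne_zero_iff.2 y.2)]
    _ = ∫⁻ r, ∫⁻ ω, g ((r : ℝ) • (ω : E)) ∂μ.toSphere
          ∂(Measure.volumeIoiPow (Module.finrank ℝ E - 1)) :=
        lintegral_prod_symm _ hG.aemeasurable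
    _ = _ := by
        rw [Measure.volumeIoiPow, lintegral_withDensity_eq_lintegral_mul _ (by fun_prop)
          hG.lintegral_prod_left]
        exact lintegral_subtype_comap measurableSet_Ioi fun r : ℝ =>
          ENNReal.ofReal (r ^ (Module.finrank ℝ E - 1)) *
            ∫⁻ ω : sphere (0 : E) 1, g (r • (ω : E)) ∂μ.toSphere

theorem ae_lintegral_sphere_ne_top {g : E → ℝ≥0∞} (hg : Measurable g)
    (hfin : ∫⁻ y, g y ∂μ ≠ ∞) :
    ∀ᵐ r ∂volume.restrict (Ioi (0 : ℝ)),
      ∫⁻ ω : sphere (0 : E) 1, g (r • (ω : E)) ∂μ.toSphere ≠ ∞ := by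
  have hA : Measurable fun r : ℝ => ∫⁻ ω : sphere (0 : E) 1, g (r • (ω : E)) ∂μ.toSphere :=
    Measurable.lintegral_prod_left (f := fun (ω : sphere (0 : E) 1) (r : ℝ) => g (r • (ω : E)))
      (by fun_prop)
  have hlt := ae_lt_top (by fun_prop) (lintegral_eq_lintegral_Ioi_lintegral_sphere μ hg ▸ hfin)
  filter_upwards [hlt, ae_restrict_mem measurableSet_Ioi] with r hr hrpos
  have : ENNReal.ofReal (r ^ (Module.finrank ℝ E - 1)) ≠ 0 :=
    (ENNReal.ofReal_pos.2 (pow_pos hrpos _)).ne'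
  exact fun htop => hr.ne (by rw [htop, ENNReal.mul_top this])

theorem lintegral_radial_mul_le_of_sphere_average_le {f : E → ℝ} (hf : Measurable f)
    (hf₀ : ∀ z, 0 ≤ f z) (hfin : ∫⁻ z, ENNReal.ofReal (f z) ∂μ ≠ ∞) (x : E) {C : ℝ}
    (hC : ∀ r : ℝ, 0 < r → ∫ ω : sphere (0 : E) 1, f (x - r • (ω : E)) ∂μ.toSphere ≤ C)
    {φ : ℝ → ℝ≥0∞} (hφ : Measurable fun y : E => φ ‖y‖) :
    ∫⁻ z, φ ‖x - z‖ * ENNReal.ofReal (f z) ∂μ ≤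
      ENNReal.ofReal C *
        ∫⁻ r in Ioi (0 : ℝ), ENNReal.ofReal (r ^ (Module.finrank ℝ E - 1)) * φ r := by
  have hf' : Measurable fun y => ENNReal.ofReal (f (x - y)) := by fun_prop
  -- `hC` bounds a Bochner integral, which is the junk value `0` wherever the spherical
  -- lintegral is infinite; finiteness of the total mass rules this out for a.e. `r`.
  have hsphere : ∀ᵐ r ∂volume.restrict (Ioi (0 : ℝ)),
      ∫⁻ ω : sphere (0 : E) 1, ENNReal.ofReal (f (x - r • (ω : E))) ∂μ.toSphere ≤
        ENNReal.ofReal C := by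
    have hfin' : ∫⁻ y, ENNReal.ofReal (f (x - y)) ∂μ ≠ ∞ := by
      rwa [lintegral_sub_left_eq_self (fun z => ENNReal.ofReal (f z))]
    filter_upwards [ae_lintegral_sphere_ne_top μ hf' hfin', ae_restrict_mem measurableSet_Ioi]
      with r hr hrpos
    have hint : Integrable (fun ω : sphere (0 : E) 1 => f (x - r • (ω : E))) μ.toSphere :=
      ⟨(hf.comp (by fun_prop)).aestronglyMeasurable,
        (hasFiniteIntegral_iff_ofReal (ae_of_all _ fun _ => hf₀ _)).2 hr.lt_top⟩
    rw [← ofReal_integral_eq_lintegral_ofReal hint (ae_of_all _ fun _ => hf₀ _)]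
    exact ENNReal.ofReal_le_ofReal (hC r hrpos)
  calc ∫⁻ z, φ ‖x - z‖ * ENNReal.ofReal (f z) ∂μ
      = ∫⁻ y, φ ‖y‖ * ENNReal.ofReal (f (x - y)) ∂μ := by
        rw [← lintegral_sub_left_eq_self _ x]
        simp only [sub_sub_cancel]
    _ = ∫⁻ r in Ioi (0 : ℝ), ENNReal.ofReal (r ^ (Module.finrank ℝ E - 1)) * (φ r *
          ∫⁻ ω : sphere (0 : E) 1, ENNReal.ofReal (f (x - r • (ω : E))) ∂μ.toSphere) := by
        rw [lintegral_eq_lintegral_Ioi_lintegral_sphere μ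
          (g := fun y => φ ‖y‖ * ENNReal.ofReal (f (x - y))) (hφ.mul hf')]
        refine setLIntegral_congr_fun measurableSet_Ioi fun r (hr : 0 < r) => ?_
        congr 1
        rw [← lintegral_const_mul _ (by fun_prop)]
        refine lintegral_congr fun ω => ?_
        rw [norm_smul, Real.norm_of_nonneg hr.le, norm_eq_of_mem_sphere ω, mul_one]
    _ ≤ ∫⁻ r in Ioi (0 : ℝ),
          ENNReal.ofReal (r ^ (Module.finrank ℝ E - 1)) * (φ r * ENNReal.ofReal C) := by
        refine lintegral_mono_ae (hsphere.mono fun r hr => ?_)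
        gcongr
    _ = _ := by
        rw [← lintegral_const_mul' _ _ ENNReal.ofReal_ne_top]
        congr 1 with r
        ring

theorem lintegral_rescaled_kernel_mul_density_le {f : E → ℝ} (hf : Measurable f)
    (hf₀ : ∀ z, 0 ≤ f z) (hfin : ∫⁻ z, ENNReal.ofReal (f z) ∂μ ≠ ∞) (x : E) {C : ℝ}
    (hC : ∀ r : ℝ, 0 < r → ∫ ω : sphere (0 : E) 1, f (x - r • (ω : E)) ∂μ.toSphere ≤ C)
    {K : ℝ → ℝ} (hK : ∀ t, 0 < t → 0 ≤ K t) {h : ℝ} (hh : 0 < h)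
    (hKh : AntitoneOn (fun t => h⁻¹ * K (t / h)) (Ici 0))
    (hmom : IntegrableOn (fun t => t ^ (Module.finrank ℝ E - 1) * K t) (Ioi 0)) :
    ∫⁻ z, ENNReal.ofReal (h⁻¹ * K (‖x - z‖ / h)) * ENNReal.ofReal (f z) ∂μ ≤
      ENNReal.ofReal (h ^ (Module.finrank ℝ E - 1) * C *
        ∫ t in Ioi (0 : ℝ), t ^ (Module.finrank ℝ E - 1) * K t) := by
  have hmom₀ := setIntegral_Ioi_pow_mul_nonneg (Module.finrank ℝ E - 1) hK
  calc _ ≤ ENNReal.ofReal C * ∫⁻ r in Ioi (0 : ℝ),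
          ENNReal.ofReal (r ^ (Module.finrank ℝ E - 1)) * ENNReal.ofReal (h⁻¹ * K (r / h)) :=
        lintegral_radial_mul_le_of_sphere_average_le μ hf hf₀ hfin x hC
          hKh.measurable_comp_norm.ennreal_ofReal
    _ = _ := by
        rw [lintegral_Ioi_pow_mul_rescaled_kernel _ hK hmom hh,
          ← ENNReal.ofReal_mul' (by positivity), mul_left_comm, mul_assoc]

theorem integral_comp_le_of_le_rescaled_kernel {Ω : Type*} [MeasurableSpace Ω] {P : Measure Ω}
    [IsProbabilityMeasure P] {X : Ω → E} (hX : Measurable X) {f : E → ℝ} (hf : Measurable f)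
    (hf₀ : ∀ z, 0 ≤ f z) (hlaw : P.map X = μ.withDensity fun z => ENNReal.ofReal (f z)) (x : E)
    {C : ℝ} (hC : ∀ r : ℝ, 0 < r → ∫ ω : sphere (0 : E) 1, f (x - r • (ω : E)) ∂μ.toSphere ≤ C)
    {K : ℝ → ℝ} (hK : ∀ t, 0 < t → 0 ≤ K t) {h : ℝ} (hh : 0 < h)
    (hKh : AntitoneOn (fun t => h⁻¹ * K (t / h)) (Ici 0))
    (hmom : IntegrableOn (fun t => t ^ (Module.finrank ℝ E - 1) * K t) (Ioi 0))
    {ψ : E → ℝ} (hψ : Measurable ψ) (hψ₀ : ∀ z, 0 ≤ ψ z)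
    (hψK : ∀ z, ψ z ≤ h⁻¹ * K (‖x - z‖ / h)) :
    ∫ ω, ψ (X ω) ∂P ≤ h ^ (Module.finrank ℝ E - 1) * C *
      ∫ t in Ioi (0 : ℝ), t ^ (Module.finrank ℝ E - 1) * K t := by
  have hfin : ∫⁻ z, ENNReal.ofReal (f z) ∂μ ≠ ∞ := by
    rw [← setLIntegral_univ, ← withDensity_apply _ MeasurableSet.univ, ← hlaw]
    exact measure_ne_top _ _
  have hC₀ : 0 ≤ C := (integral_nonneg fun _ => hf₀ _).trans (hC 1 one_pos)
  have hmom₀ := setIntegral_Ioi_pow_mul_nonneg (Module.finrank ℝ E - 1) hK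
  rw [← integral_map hX.aemeasurable hψ.aestronglyMeasurable, hlaw,
    integral_eq_lintegral_of_nonneg_ae (ae_of_all _ hψ₀) hψ.aestronglyMeasurable]
  refine ENNReal.toReal_le_of_le_ofReal (by positivity) ?_
  rw [lintegral_withDensity_eq_lintegral_mul _ hf.ennreal_ofReal hψ.ennreal_ofReal]
  refine le_trans (lintegral_mono fun z => ?_)
    (lintegral_rescaled_kernel_mul_density_le μ hf hf₀ hfin x hC hK hh hKh hmom)
  rw [Pi.mul_apply, mul_comm]
  gcongr
  exact hψK z

end PolarCoordinates

section Hoeffding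

variable {Ω ι : Type*} [MeasurableSpace Ω] {μ : Measure Ω} [IsProbabilityMeasure μ]

theorem ofReal_one_sub_le_measure_sum_le_sum_integral_add {U : ι → Ω → ℝ}
    (hindep : iIndepFun U μ) (hmeas : ∀ i, Measurable (U i)) {s : Finset ι} {a b : ℝ}
    (hU : ∀ i ∈ s, ∀ ω, U i ω ∈ Icc a b) {γ : ℝ} (hγ : γ ∈ Ioo (0 : ℝ) 1) :
    ENNReal.ofReal (1 - γ) ≤ μ {ω | ∑ i ∈ s, U i ω ≤
      ∑ i ∈ s, μ[U i] + (b - a) * √(s.card * Real.log (1 / γ) / 2)} := by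
  set ε := (b - a) * √(s.card * Real.log (1 / γ) / 2)
  have hlog : 0 < Real.log (1 / γ) := Real.log_pos (one_lt_one_div hγ.1 hγ.2)
  rcases s.eq_empty_or_nonempty with rfl | ⟨i₀, hi₀⟩
  · simp [ε, hγ.1.le]
  have hcard : (0 : ℝ) < s.card := Nat.cast_pos.2 (Finset.card_pos.2 ⟨i₀, hi₀⟩)
  obtain ⟨ω₀⟩ := nonempty_of_isProbabilityMeasure μ
  rcases (hU i₀ hi₀ ω₀).1.trans (hU i₀ hi₀ ω₀).2 |>.eq_or_lt with rfl | hab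
  · have hconst : ∀ i ∈ s, ∀ ω, U i ω = μ[U i] := fun i hi ω => by
      have : U i = fun _ => a := funext fun ω' => (hU i hi ω').1.antisymm' (hU i hi ω').2
      simp [this]
    simp [ε, hγ.1.le, Finset.sum_congr rfl fun i hi => hconst i hi _]
  have hε : 0 < ε := mul_pos (sub_pos.2 hab) (Real.sqrt_pos.2 (by positivity))
  set bad := {ω | ε ≤ ∑ i ∈ s, (U i ω - μ[U i])}
  have hbad_meas : MeasurableSet bad :=
    measurableSet_le measurable_const (Finset.measurable_sum _ fun i _ => (hmeas i).sub_const _)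
  have htail : μ.real bad ≤ γ := by
    have hcentered : iIndepFun (fun i ω => U i ω - μ[U i]) μ :=
      hindep.comp _ fun i => measurable_id.sub_const (∫ ω, U i ω ∂μ)
    refine (HasSubgaussianMGF.measure_sum_ge_le_of_iIndepFun hcentered
      (fun i hi => hasSubgaussianMGF_of_mem_Icc (hmeas i).aemeasurable
        (ae_of_all _ (hU i hi))) hε.le).trans_eq ?_
    have hba : ((‖b - a‖₊ : ℝ≥0) : ℝ) = b - a := by
      rw [coe_nnnorm, Real.norm_of_nonneg (sub_pos.2 hab).le]
    simp only [Finset.sum_const, nsmul_eq_mul, NNReal.coe_mul, NNReal.coe_natCast,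
      NNReal.coe_pow, NNReal.coe_div, hba, NNReal.coe_ofNat, ε, mul_pow,
      Real.sq_sqrt (by positivity : (0 : ℝ) ≤ s.card * Real.log (1 / γ) / 2)]
    refine (congrArg Real.exp ?_).trans (Real.exp_log hγ.1)
    rw [one_div, Real.log_inv]
    field_simp
  calc ENNReal.ofReal (1 - γ) ≤ ENNReal.ofReal (μ.real badᶜ) := by
        rw [probReal_compl_eq_one_sub hbad_meas]
        exact ENNReal.ofReal_le_ofReal (by linarith)
    _ = μ badᶜ := ofReal_measureReal
    _ ≤ _ := measure_mono fun ω hω => by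
        simp only [bad, mem_compl_iff, mem_ofPred_eq, not_le, Finset.sum_sub_distrib] at hω ⊢
        linarith

end Hoeffding

theorem kernel_weighted_cdf_bias_control_general
    {Ω : Type*} [MeasurableSpace Ω]
    (μ : Measure Ω) [IsProbabilityMeasure μ]
    (d : ℕ) (hd : 1 ≤ d)
    -- the i.i.d. sample `X_1, …, X_m`, with common density `f_X`
    (m : ℕ) (Xs : Fin m → Ω → EuclideanSpace ℝ (Fin d))
    (hXs_meas : ∀ k, Measurable (Xs k))
    (hXs_indep : iIndepFun Xs μ)
    (fX : EuclideanSpace ℝ (Fin d) → ℝ) (hfX_meas : Measurable fX)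
    (hfX_nonneg : ∀ x, 0 ≤ fX x)
    (hXs_law : ∀ k, μ.map (Xs k) =
      volume.withDensity (fun x => ENNReal.ofReal (fX x)))
    -- the kernel `K_1` and its rescaling `K_h`
    (K1 : ℝ → ℝ) (hK1_nonneg : ∀ t, 0 ≤ K1 t)
    (h : ℝ) (hh : 0 < h)
    (hKh_antitone : AntitoneOn (fun t => h⁻¹ * K1 (t / h)) (Set.Ici (0 : ℝ)))
    (hK1_sup_bdd : BddAbove (Set.range fun t : Set.Ici (0 : ℝ) => (t : ℝ) * K1 (t : ℝ)))
    -- the conditional c.d.f. `F(v | z)` of `V_φ(X,Y)` given `X = z`,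
    -- `M`-Lipschitz in `z` for every `v`
    (Fc : EuclideanSpace ℝ (Fin d) → ℝ → ℝ)
    (hFc_cdf : ∀ z v, Fc z v ∈ Set.Icc (0 : ℝ) 1)
    (M : ℝ≥0) (hFc_lip : ∀ v, LipschitzWith M (fun z => Fc z v))
    -- the fixed covariate point `x`
    (x : EuclideanSpace ℝ (Fin d))
    -- `F_X(·, x)` and `D_h(x)`, assumed finite
    (FX : ℝ → ℝ)
    (hFX_def : ∀ t, FX t =
      ∫ ω : Metric.sphere (0 : EuclideanSpace ℝ (Fin d)) 1,
        fX (x - t • (ω : EuclideanSpace ℝ (Fin d)))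
        ∂((volume : Measure (EuclideanSpace ℝ (Fin d))).toSphere))
    (hFX_bdd : BddAbove (Set.range FX))
    (hK1_mom : IntegrableOn (fun t => t ^ (d - 1) * K1 t) (Set.Ioi (0 : ℝ))) :
    ∀ γ : ℝ, γ ∈ Set.Ioo (0 : ℝ) 1 →
      ENNReal.ofReal (1 - γ) ≤
        μ {ω |
          (⨆ v : ℝ, |∑ k : Fin m,
              (h⁻¹ * K1 (‖x - Xs k ω‖ / h)) * (Fc (Xs k ω) v - Fc x v)|) ≤
            m * (h ^ (d - 1) * (⨆ t : ℝ, FX t) *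
                ∫ t in Set.Ioi (0 : ℝ), t ^ (d - 1) * K1 t) +
              (M : ℝ) * (⨆ t : Set.Ici (0 : ℝ), (t : ℝ) * K1 (t : ℝ)) *
                Real.sqrt (m * Real.log (1 / γ) / 2)} := by
  intro γ hγ
  have : Nontrivial (EuclideanSpace ℝ (Fin d)) :=
    have : Nonempty (Fin d) := ⟨⟨0, hd⟩⟩; inferInstance
  set S := ⨆ t : Ici (0 : ℝ), (t : ℝ) * K1 t
  set D := h ^ (d - 1) * (⨆ t : ℝ, FX t) * ∫ t in Ioi (0 : ℝ), t ^ (d - 1) * K1 t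
  set ψ : EuclideanSpace ℝ (Fin d) → ℝ :=
    fun z => h⁻¹ * K1 (‖x - z‖ / h) * min 1 (M * ‖x - z‖)
  have hKh₀ : ∀ r, 0 ≤ h⁻¹ * K1 (r / h) := fun r =>
    mul_nonneg (inv_nonneg.2 hh.le) (hK1_nonneg _)
  -- `K1` is not assumed measurable: the monotonicity of `K_h` provides it.
  have hψ_meas : Measurable ψ :=
    (hKh_antitone.measurable_comp_norm.comp (measurable_const.sub measurable_id)).mul (by fun_prop)
  have hψ_mem : ∀ z, ψ z ∈ Icc 0 (M * S) := fun z =>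
    rescaled_kernel_mul_min_mem_Icc hK1_nonneg hK1_sup_bdd hh M (norm_nonneg _)
  have hmean : ∀ k, ∫ ω, ψ (Xs k ω) ∂μ ≤ D := fun k => by
    simpa using integral_comp_le_of_le_rescaled_kernel volume (hXs_meas k) hfX_meas hfX_nonneg
      (hXs_law k) x (fun r _ => hFX_def r ▸ le_ciSup hFX_bdd r) (fun t _ => hK1_nonneg t) hh
      hKh_antitone (by simpa using hK1_mom) hψ_meas (fun z => (hψ_mem z).1)
      (fun z => mul_le_of_le_one_right (hKh₀ _) (min_le_left _ _))
  refine (ofReal_one_sub_le_measure_sum_le_sum_integral_add (U := fun k ω => ψ (Xs k ω))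
    (s := Finset.univ) (hXs_indep.comp _ fun _ => hψ_meas) (fun k => hψ_meas.comp (hXs_meas k))
    (fun k _ ω => hψ_mem _) hγ).trans (measure_mono fun ω (hω : ω ∈ {ω | _}) => ?_)
  simp only [Finset.card_univ, Fintype.card_fin, sub_zero, mem_ofPred_eq] at hω ⊢
  calc _ ≤ ∑ k, ψ (Xs k ω) :=
        ciSup_abs_sum_mul_le _ (fun _ => hKh₀ _) fun k v => by
          simpa only [dist_comm, dist_eq_norm] using
            (hFc_lip v).abs_sub_le_min_one (fun z => hFc_cdf z v) (Xs k ω) x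
    _ ≤ ∑ k, ∫ ω, ψ (Xs k ω) ∂μ + M * S * √(m * Real.log (1 / γ) / 2) := hω
    _ ≤ m * D + M * S * √(m * Real.log (1 / γ) / 2) := by
        gcongr
        simpa using Finset.sum_le_sum fun k (_ : k ∈ Finset.univ) => hmean k

/-- Bias control for kernel-weighted conditional c.d.f.s:
with `X_1, …, X_m` i.i.d. with density `f_X`, weights `w̃_k(x) = K_h(‖x - X_k‖)`,
a conditional c.d.f. `F(v | ·)` that is `M`-Lipschitz for every `v`, and a
non-increasing rescaled kernel, for every `γ ∈ (0,1)`, with probability at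
least `1 - γ`,
`sup_v |Σ_k w̃_k(x)(F(v|X_k) - F(v|x))| ≤ m·D_h(x) + M·sup_{t≥0}{tK_1(t)}·√(m log(1/γ)/2)`,
where `D_h(x) = h^{d-1}·‖F_X(·,x)‖_∞·∫_0^∞ t^{d-1}K_1(t)dt` and
`F_X(t,x) = ∫_{S^{d-1}} f_X(x - tω) dσ(ω)`. -/
theorem kernel_weighted_cdf_bias_control
    {Ω : Type*} [MeasurableSpace Ω]
    (μ : Measure Ω) [IsProbabilityMeasure μ]
    (d : ℕ) (hd : 1 ≤ d)
    -- the i.i.d. sample `X_1, …, X_m`, with common density `f_X`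
    (m : ℕ) (Xs : Fin m → Ω → EuclideanSpace ℝ (Fin d))
    (hXs_meas : ∀ k, Measurable (Xs k))
    (hXs_indep : iIndepFun Xs μ)
    (fX : EuclideanSpace ℝ (Fin d) → ℝ) (hfX_meas : Measurable fX)
    (hfX_nonneg : ∀ x, 0 ≤ fX x)
    (hXs_law : ∀ k, μ.map (Xs k) =
      volume.withDensity (fun x => ENNReal.ofReal (fX x)))
    -- the kernel `K_1` and its rescaling `K_h`
    (K1 : ℝ → ℝ) (hK1_nonneg : ∀ t, 0 ≤ K1 t)
    (hK1_int : ∫ t in Set.Ioi (0 : ℝ), K1 t = 1)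
    (h : ℝ) (hh : 0 < h)
    (hKh_antitone : AntitoneOn (fun t => h⁻¹ * K1 (t / h)) (Set.Ici (0 : ℝ)))
    (hK1_sup_bdd : BddAbove (Set.range fun t : Set.Ici (0 : ℝ) => (t : ℝ) * K1 (t : ℝ)))
    -- the conditional c.d.f. `F(v | z)` of `V_φ(X,Y)` given `X = z`,
    -- `M`-Lipschitz in `z` for every `v`
    (Fc : EuclideanSpace ℝ (Fin d) → ℝ → ℝ)
    (hFc_cdf : ∀ z v, Fc z v ∈ Set.Icc (0 : ℝ) 1)
    (hFc_mono : ∀ z, Monotone (Fc z))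
    (M : ℝ≥0) (hFc_lip : ∀ v, LipschitzWith M (fun z => Fc z v))
    -- the fixed covariate point `x`
    (x : EuclideanSpace ℝ (Fin d))
    -- `F_X(·, x)` and `D_h(x)`, assumed finite
    (FX : ℝ → ℝ)
    (hFX_def : ∀ t, FX t =
      ∫ ω : Metric.sphere (0 : EuclideanSpace ℝ (Fin d)) 1,
        fX (x - t • (ω : EuclideanSpace ℝ (Fin d)))
        ∂((volume : Measure (EuclideanSpace ℝ (Fin d))).toSphere))
    (hFX_bdd : BddAbove (Set.range FX))
    (hK1_mom : IntegrableOn (fun t => t ^ (d - 1) * K1 t) (Set.Ioi (0 : ℝ))) :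
    ∀ γ : ℝ, γ ∈ Set.Ioo (0 : ℝ) 1 →
      ENNReal.ofReal (1 - γ) ≤
        μ {ω |
          (⨆ v : ℝ, |∑ k : Fin m,
              (h⁻¹ * K1 (‖x - Xs k ω‖ / h)) * (Fc (Xs k ω) v - Fc x v)|) ≤
            m * (h ^ (d - 1) * (⨆ t : ℝ, FX t) *
                ∫ t in Set.Ioi (0 : ℝ), t ^ (d - 1) * K1 t) +
              (M : ℝ) * (⨆ t : Set.Ici (0 : ℝ), (t : ℝ) * K1 (t : ℝ)) *
                Real.sqrt (m * Real.log (1 / γ) / 2)} :=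
  kernel_weighted_cdf_bias_control_general μ d hd m Xs hXs_meas hXs_indep fX hfX_meas hfX_nonneg
    hXs_law K1 hK1_nonneg h hh hKh_antitone hK1_sup_bdd Fc hFc_cdf M hFc_lip x FX hFX_def hFX_bdd
    hK1_mom
end
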